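/- arXiv:2107.11478 — 3 statements merged into one kernel-verified Lean document; each statement's English description precedes it below -/
import Mathlib

section
/- The space of ℂ-derivations of the product algebra ℂ × (ℂ[X]/(X³)) has dimension 2 over ℂ; explicitly, every such derivation vanishes on the idempotents (1,0) and (0,1) and is uniquely determined by its value on (0, x), which may be any element of the ideal generated by (0, x) (here x denotes the class of X in ℂ[X]/(X³)). -/
set_option synthInstance.maxHeartbeats 400000
set_option maxHeartbeats 1000000

/-- The truncated polynomial algebra `ℂ[X]/(X³)`. -/
noncomputable abbrev TruncPoly3 : Type :=
  Polynomial ℂ ⧸ Ideal.span {(Polynomial.X : Polynomial ℂ) ^ 3}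

/-- The class of `X` in `ℂ[X]/(X³)`. -/
noncomputable abbrev truncX3 : TruncPoly3 :=
  Ideal.Quotient.mk (Ideal.span {(Polynomial.X : Polynomial ℂ) ^ 3}) Polynomial.X

/-!
A derivation kills every idempotent `e`, since `D e = 2 e D e` forces `e D e = 0`. The algebra
`ℂ × ℂ[X]/(X³)` is generated by the idempotent `(1, 0)` and `t = (0, x)`, so a derivation is
determined by `D t`. Applying `D` to `(1, 0) t = 0` and to `t³ = 0` gives `D t = (0, y)` with
`x² y = 0`, i.e. `D t ∈ (t)`; conversely `(0, x q)` is the value at `t` of the derivation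
`q X d/dX` acting on the second factor. Hence `D ↦ D t` identifies the derivations with the
ideal `(t) = ℂ t ⊕ ℂ t²`.
-/

open Polynomial Module

namespace Derivation

section Idempotent

variable {R A M : Type*} [CommSemiring R] [CommSemiring A] [Algebra R A] [AddCommGroup M]
  [Module A M] [Module R M]

theorem map_eq_zero_of_isIdempotentElem (D : Derivation R A M) {e : A}
    (he : IsIdempotentElem e) : D e = 0 := by
  have hDe : D e = e • D e + e • D e := by
    simpa only [he.eq] using D.leibniz e e
  have heDe : e • D e = e • D e + e • D e := by
    conv_lhs => rw [hDe, smul_add, smul_smul, he.eq]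
  rw [hDe, left_eq_add.mp heDe, add_zero]

end Idempotent

variable {R A B M : Type*} [CommSemiring R] [CommSemiring A] [CommSemiring B] [Algebra R A]
  [Algebra R B]

def evalₗ [AddCommMonoid M] [Module A M] [Module R M] [IsScalarTower R A M] (a : A) :
    Derivation R A M →ₗ[R] M where
  toFun D := D a
  map_add' _ _ := rfl
  map_smul' _ _ := rfl

variable (A) in
def prodSnd (d : Derivation R B B) : Derivation R (A × B) (A × B) where
  toLinearMap := LinearMap.inr R A B ∘ₗ d.toLinearMap ∘ₗ LinearMap.snd R A B
  map_one_eq_zero' := by simp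
  leibniz' p q := by ext <;> simp [add_comm]

@[simp]
theorem prodSnd_apply (d : Derivation R B B) (p : A × B) : d.prodSnd A p = (0, d p.2) := rfl

end Derivation

namespace Polynomial

variable {R : Type*} [CommRing R]

theorem X_pow_dvd_derivative_mul_X_mul {n : ℕ} {p : R[X]} (h : X ^ n ∣ p) (q : R[X]) :
    X ^ n ∣ derivative p * (X * q) := by
  obtain ⟨g, rfl⟩ := h
  cases n with
  | zero => simp
  | succ n =>
    refine ⟨(C (n + 1 : R) * g + X * derivative g) * q, ?_⟩
    rw [derivative_mul, derivative_X_pow]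
    push_cast
    ring

variable (n : ℕ)

noncomputable def truncDerivation (q : R[X]) :
    Derivation R (R[X] ⧸ Ideal.span {(X : R[X]) ^ n}) (R[X] ⧸ Ideal.span {(X : R[X]) ^ n}) :=
  Derivation.liftOfSurjective (f := Ideal.Quotient.mkₐ R (Ideal.span {(X : R[X]) ^ n}))
    (Ideal.Quotient.mkₐ_surjective R _) (d := mkDerivation R (X * q)) fun p hp => by
      simp only [Ideal.Quotient.mkₐ_eq_mk, Ideal.Quotient.eq_zero_iff_mem,
        Ideal.mem_span_singleton, mkDerivation_apply, smul_eq_mul] at hp ⊢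
      exact X_pow_dvd_derivative_mul_X_mul hp q

theorem truncDerivation_mk (q p : R[X]) :
    truncDerivation n q (Ideal.Quotient.mk _ p) =
      Ideal.Quotient.mk _ (derivative p * (X * q)) := by
  rw [truncDerivation, ← Ideal.Quotient.mkₐ_eq_mk R, Derivation.liftOfSurjective_apply,
    mkDerivation_apply, smul_eq_mul]

theorem mem_span_mk_X_of_mk_X_pow_mul_eq_zero {y : R[X] ⧸ Ideal.span {(X : R[X]) ^ (n + 1)}}
    (hy : Ideal.Quotient.mk _ X ^ n * y = 0) : y ∈ Ideal.span {Ideal.Quotient.mk _ X} := by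
  obtain ⟨p, rfl⟩ := Ideal.Quotient.mk_surjective y
  rw [← map_pow, ← map_mul, Ideal.Quotient.eq_zero_iff_mem, Ideal.mem_span_singleton,
    X_pow_dvd_iff] at hy
  obtain ⟨s, rfl⟩ : X ∣ p :=
    X_dvd_iff.mpr (by simpa [coeff_X_pow_mul'] using hy n n.lt_succ_self)
  rw [map_mul]
  exact Ideal.mul_mem_right _ _ (Ideal.subset_span rfl)

end Polynomial

theorem Ideal.Quotient.adjoin_mk_X_eq_top {R : Type*} [CommRing R] (I : Ideal R[X]) :
    Algebra.adjoin R {Ideal.Quotient.mk I X} = ⊤ := by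
  rw [Algebra.adjoin_singleton_eq_range_aeval, Algebra.eq_top_iff]
  intro y
  obtain ⟨p, rfl⟩ := Ideal.Quotient.mk_surjective y
  refine ⟨p, ?_⟩
  change aeval _ p = _
  rw [← Ideal.Quotient.mkₐ_eq_mk R, aeval_algHom_apply, aeval_X_left_apply]

theorem IsIdempotentElem.prodMk {A B : Type*} [Mul A] [Mul B] {a : A} {b : B}
    (ha : IsIdempotentElem a) (hb : IsIdempotentElem b) : IsIdempotentElem (a, b) :=
  Prod.ext ha hb

theorem Prod.mem_span_singleton_zero_mk_iff {A B : Type*} [CommSemiring A] [CommSemiring B]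
    {x : B} {v : A × B} :
    v ∈ Ideal.span {((0 : A), x)} ↔ v.1 = 0 ∧ v.2 ∈ Ideal.span {x} := by
  simp only [Ideal.mem_span_singleton']
  constructor
  · rintro ⟨a, rfl⟩
    exact ⟨mul_zero _, a.2, rfl⟩
  · rintro ⟨h1, b, hb⟩
    exact ⟨(0, b), Prod.ext (by simp [h1]) hb⟩

theorem Algebra.adjoin_one_zero_zero_mk_eq_top {R B : Type*} [CommRing R] [Semiring B]
    [Algebra R B] {x : B} (hx : Algebra.adjoin R {x} = ⊤) :
    Algebra.adjoin R {((1 : R), (0 : B)), ((0 : R), x)} = ⊤ := by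
  rw [Algebra.eq_top_iff]
  rintro ⟨a, b⟩
  obtain ⟨p, rfl⟩ : b ∈ Set.range (aeval (R := R) x) := by
    rw [← AlgHom.coe_range, ← Algebra.adjoin_singleton_eq_range_aeval, hx]; trivial
  have hab : ((a, aeval x p) : R × B) =
      (a - p.eval 0) • ((1 : R), (0 : B)) + aeval (0, x) p := by
    ext <;> simp [aeval_prod_apply]
  rw [hab]
  exact add_mem (Subalgebra.smul_mem _ (Algebra.subset_adjoin (Set.mem_insert _ _)) _)
    (Algebra.adjoin_mono (Set.subset_insert _ _) (aeval_mem_adjoin_singleton R _))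

local notation "𝔵" => (((0 : ℂ), truncX3) : ℂ × TruncPoly3)

theorem truncX3_pow_three : truncX3 ^ 3 = 0 := by
  rw [← map_pow, Ideal.Quotient.eq_zero_iff_mem]
  exact Ideal.mem_span_singleton_self _

theorem zero_truncX3_pow_three : 𝔵 ^ 3 = 0 := by
  rw [Prod.pow_mk, zero_pow three_ne_zero, truncX3_pow_three, Prod.mk_zero_zero]

theorem derivation_apply_zero_truncX3_mem_span
    (D : Derivation ℂ (ℂ × TruncPoly3) (ℂ × TruncPoly3)) :
    D 𝔵 ∈ Ideal.span {𝔵} := by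
  rw [Prod.mem_span_singleton_zero_mk_iff]
  constructor
  · have h := D.leibniz ((1 : ℂ), (0 : TruncPoly3)) 𝔵
    rw [D.map_eq_zero_of_isIdempotentElem (.prodMk .one .zero), smul_zero, add_zero,
      Prod.mk_mul_mk, mul_zero, zero_mul, Prod.mk_zero_zero, map_zero] at h
    simpa using (congrArg Prod.fst h).symm
  · apply mem_span_mk_X_of_mk_X_pow_mul_eq_zero 2
    have h := D.leibniz_pow 𝔵 3
    rw [zero_truncX3_pow_three, map_zero, ← Nat.cast_smul_eq_nsmul ℂ, eq_comm,
      smul_eq_zero] at h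
    simpa using congrArg Prod.snd (h.resolve_left three_ne_zero)

theorem range_derivation_apply_zero_truncX3 :
    Set.range (fun D : Derivation ℂ (ℂ × TruncPoly3) (ℂ × TruncPoly3) => D 𝔵) =
      (Ideal.span {𝔵} : Set (ℂ × TruncPoly3)) := by
  ext v
  constructor
  · rintro ⟨D, rfl⟩
    exact derivation_apply_zero_truncX3_mem_span D
  · intro hv
    obtain ⟨hv₁, hv₂⟩ := Prod.mem_span_singleton_zero_mk_iff.mp hv
    obtain ⟨r, hr⟩ := Ideal.mem_span_singleton'.mp hv₂
    obtain ⟨q, rfl⟩ := Ideal.Quotient.mk_surjective r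
    refine ⟨(truncDerivation 3 q).prodSnd ℂ, Prod.ext hv₁.symm ?_⟩
    change (truncDerivation 3 q truncX3) = _
    rw [truncDerivation_mk, derivative_X, one_mul, map_mul, ← hr, mul_comm]

theorem derivation_ext_of_apply_zero_truncX3_eq
    {D₁ D₂ : Derivation ℂ (ℂ × TruncPoly3) (ℂ × TruncPoly3)}
    (h : D₁ 𝔵 = D₂ 𝔵) : D₁ = D₂ := by
  refine Derivation.ext_of_adjoin_eq_top _
    (Algebra.adjoin_one_zero_zero_mk_eq_top (Ideal.Quotient.adjoin_mk_X_eq_top _)) ?_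
  rintro _ (rfl | rfl)
  · rw [D₁.map_eq_zero_of_isIdempotentElem (.prodMk .one .zero),
      D₂.map_eq_zero_of_isIdempotentElem (.prodMk .one .zero)]
  · exact h

theorem zero_truncX3_pow_mem_span (k : ℕ) (hk : k ≠ 0) :
    𝔵 ^ k ∈ Submodule.span ℂ (Set.range ![𝔵, 𝔵 ^ 2]) := by
  match k, hk with
  | 1, _ => rw [pow_one]; exact Submodule.subset_span ⟨0, rfl⟩
  | 2, _ => exact Submodule.subset_span ⟨1, rfl⟩
  | k + 3, _ =>
    rw [pow_add, zero_truncX3_pow_three, mul_zero]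
    exact zero_mem _

theorem zero_mk_mul_truncX3_mem_span (p : ℂ[X]) :
    ((0 : ℂ), Ideal.Quotient.mk _ p * truncX3) ∈
      Submodule.span ℂ (Set.range ![𝔵, 𝔵 ^ 2]) := by
  induction p using Polynomial.induction_on' with
  | add p q hp hq => simpa [add_mul] using add_mem hp hq
  | monomial n c =>
    have h : ((0 : ℂ), Ideal.Quotient.mk _ (monomial n c) * truncX3) = c • 𝔵 ^ (n + 1) := by
      ext <;> simp [Prod.pow_mk, ← C_mul_X_pow_eq_monomial, C_eq_algebraMap,
        Ideal.Quotient.mk_algebraMap, pow_succ, truncX3, Algebra.algebraMap_eq_smul_one]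
    exact h ▸ Submodule.smul_mem _ c (zero_truncX3_pow_mem_span (n + 1) n.succ_ne_zero)

theorem span_zero_truncX3_eq :
    (Ideal.span {𝔵}).restrictScalars ℂ = Submodule.span ℂ (Set.range ![𝔵, 𝔵 ^ 2]) := by
  refine le_antisymm (fun v hv => ?_) (Submodule.span_le.mpr ?_)
  · obtain ⟨⟨a, b⟩, rfl⟩ := Ideal.mem_span_singleton'.mp hv
    obtain ⟨p, rfl⟩ := Ideal.Quotient.mk_surjective b
    simpa using zero_mk_mul_truncX3_mem_span p
  · rintro _ ⟨i, rfl⟩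
    fin_cases i
    · exact Ideal.mem_span_singleton_self _
    · exact Ideal.pow_mem_of_mem _ (Ideal.mem_span_singleton_self _) 2 two_pos

theorem linearIndependent_zero_truncX3 : LinearIndependent ℂ ![𝔵, 𝔵 ^ 2] := by
  rw [LinearIndependent.pair_iff]
  intro s u h
  have h₂ : Ideal.Quotient.mk (Ideal.span {(X : ℂ[X]) ^ 3}) (C s * X + C u * X ^ 2) = 0 := by
    simpa [C_eq_algebraMap, Ideal.Quotient.mk_algebraMap, Algebra.algebraMap_eq_smul_one, truncX3]
      using congrArg Prod.snd h
  rw [Ideal.Quotient.eq_zero_iff_mem, Ideal.mem_span_singleton, X_pow_dvd_iff] at h₂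
  exact ⟨by simpa using h₂ 1 (by norm_num), by simpa using h₂ 2 (by norm_num)⟩

theorem finrank_span_zero_truncX3 : finrank ℂ ((Ideal.span {𝔵}).restrictScalars ℂ) = 2 := by
  rw [span_zero_truncX3_eq, finrank_span_eq_card linearIndependent_zero_truncX3,
    Fintype.card_fin]

/-- The space of ℂ-derivations of `ℂ × ℂ[X]/(X³)` is two-dimensional over ℂ: every
derivation vanishes on the idempotents `(1,0)` and `(0,1)`, is uniquely determined by
its value on `(0, x)`, and this value can be any element of the ideal generated by
`(0, x)`. -/
theorem stmt_9 :
    Module.finrank ℂ (Derivation ℂ (ℂ × TruncPoly3) (ℂ × TruncPoly3)) = 2 ∧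
    (∀ D : Derivation ℂ (ℂ × TruncPoly3) (ℂ × TruncPoly3),
      D ((1 : ℂ), (0 : TruncPoly3)) = 0 ∧ D ((0 : ℂ), (1 : TruncPoly3)) = 0) ∧
    (∀ D₁ D₂ : Derivation ℂ (ℂ × TruncPoly3) (ℂ × TruncPoly3),
      D₁ ((0 : ℂ), truncX3) = D₂ ((0 : ℂ), truncX3) → D₁ = D₂) ∧
    Set.range (fun D : Derivation ℂ (ℂ × TruncPoly3) (ℂ × TruncPoly3) =>
        D ((0 : ℂ), truncX3)) =
      ((Ideal.span {(((0 : ℂ), truncX3) : ℂ × TruncPoly3)} : Ideal (ℂ × TruncPoly3)) :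
        Set (ℂ × TruncPoly3)) := by
  refine ⟨?_, fun D => ⟨D.map_eq_zero_of_isIdempotentElem (.prodMk .one .zero),
    D.map_eq_zero_of_isIdempotentElem (.prodMk .zero .one)⟩,
    fun _ _ => derivation_ext_of_apply_zero_truncX3_eq, range_derivation_apply_zero_truncX3⟩
  let eval : Derivation ℂ (ℂ × TruncPoly3) (ℂ × TruncPoly3) →ₗ[ℂ] ℂ × TruncPoly3 :=
    Derivation.evalₗ 𝔵
  have hinj : Function.Injective eval := fun _ _ => derivation_ext_of_apply_zero_truncX3_eq
  have hrange : LinearMap.range eval = (Ideal.span {𝔵}).restrictScalars ℂ :=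
    SetLike.coe_injective ((LinearMap.coe_range eval).trans range_derivation_apply_zero_truncX3)
  rw [(LinearEquiv.ofInjective _ hinj).finrank_eq, hrange, finrank_span_zero_truncX3]
end

section
/- Let L be a module over DualNumber ℂ (so that in particular L is a ℂ-vector space and ε acts ℂ-linearly with square zero), regarded as an abelian complex Lie algebra, and let ρ : L → Derivations(DualNumber ℂ) be a ℂ-linear map such that for all x, y ∈ L and all a ∈ DualNumber ℂ one has (ρ x a) • y = 0 (the Lie–Rinehart compatibility condition for an abelian bracket). Then either ε • y = 0 for every y ∈ L (the action is trivial), or ρ = 0 (the anchor is null). -/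
/-! A derivation `D` of `ℂ[ε]` is determined by `D ε`, and differentiating `ε² = 0` shows that
`D ε` is a multiple `λ ε`. The compatibility condition for `a = ε` then reads `λ • (ε • y) = 0`,
so as soon as some `ε • y` is nonzero every `λ` vanishes, and with it the anchor. -/

namespace DualNumber

open TrivSqZeroExt

variable {R : Type*} [CommRing R]

theorem derivation_apply_eq_snd_smul {M : Type*} [AddCommGroup M] [Module R M]
    [Module R[ε] M] [IsScalarTower R R[ε] M] (D : Derivation R R[ε] M) (a : R[ε]) :
    D a = a.snd • D ε := by
  conv_lhs => rw [← inl_fst_add_inr_snd_eq a, inr_eq_smul_eps]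
  rw [map_add, Derivation.map_smul, ← algebraMap_eq_inl, Derivation.map_algebraMap, zero_add]

theorem fst_derivation_eps [IsAddTorsionFree R] (D : Derivation R R[ε] R[ε]) :
    (D ε).fst = 0 := by
  have h := congrArg snd (D.leibniz ε ε)
  rw [eps_mul_eps, map_zero] at h
  simp only [smul_eq_mul, snd_add, snd_mul, fst_eps, snd_eps, snd_zero, zero_mul, one_mul,
    zero_add] at h
  exact two_nsmul_eq_zero.1 ((two_nsmul _).trans h.symm)

theorem derivation_eps_eq_smul_eps [IsAddTorsionFree R] (D : Derivation R R[ε] R[ε]) :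
    D ε = (D ε).snd • ε := by
  rw [← inr_eq_smul_eps]
  ext
  · exact fst_derivation_eps D
  · rfl

end DualNumber

/-- Let `L` be a module over the dual numbers `ℂ[ε]` (in particular a ℂ-vector space),
regarded as an abelian complex Lie algebra, and let `ρ` be a ℂ-linear map from `L` to
the ℂ-derivations of `ℂ[ε]` satisfying the Lie–Rinehart compatibility condition for the
abelian bracket, `(ρ x a) • y = 0`.  Then either `ε` acts by zero on `L` (the action is
trivial) or `ρ = 0` (the anchor is null). -/
theorem stmt_12 (L : Type*) [AddCommGroup L] [Module ℂ L]
    [Module (DualNumber ℂ) L] [IsScalarTower ℂ (DualNumber ℂ) L]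
    (ρ : L →ₗ[ℂ] Derivation ℂ (DualNumber ℂ) (DualNumber ℂ))
    (hcomp : ∀ (x y : L) (a : DualNumber ℂ), (ρ x a) • y = 0) :
    (∀ y : L, (DualNumber.eps : DualNumber ℂ) • y = 0) ∨ ρ = 0 := by
  refine or_iff_not_imp_left.2 fun hε => ?_
  push Not at hε
  obtain ⟨y, hy⟩ := hε
  have hρε : ∀ x, (ρ x DualNumber.eps).snd = 0 := fun x => by
    have h := hcomp x y DualNumber.eps
    rw [DualNumber.derivation_eps_eq_smul_eps, smul_assoc, smul_eq_zero] at h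
    exact h.resolve_right hy
  refine LinearMap.ext fun x => Derivation.ext fun a => ?_
  rw [DualNumber.derivation_apply_eq_snd_smul, DualNumber.derivation_eps_eq_smul_eps, hρε,
    zero_smul, smul_zero]
  rfl
end

section
/- Let L be a module over DualNumber ℂ which is also a complex Lie algebra with elements f₁, f₂ that are linearly independent, span L, and satisfy ⁅f₁, f₂⁆ = f₂. Let ρ : L → Derivations(DualNumber ℂ) be a ℂ-linear Lie algebra homomorphism (for the commutator bracket on derivations) satisfying the compatibility condition ⁅x, a • y⁆ = (ρ x a) • y + a • ⁅x, y⁆ for all a ∈ DualNumber ℂ and x, y ∈ L. Then ρ f₂ = 0, ε • f₂ = 0, and there exist β, c ∈ ℂ such that ε • f₁ = β • f₂, (ρ f₁)(ε) = c • ε, and β·(1 − c) = 0 (so if the action of ε is nontrivial then (ρ f₁)(ε) = ε). -/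
/-!
A derivation `D` of `R[ε]` is determined by `D ε`, and applying `D` to `ε * ε = 0` forces
`D ε ∈ R ε` once `R` has no `2`-torsion. Hence derivations of `ℂ[ε]` commute, and
`ρ f₂ = ρ ⁅f₁, f₂⁆ = 0`. The compatibility condition then says that `ad f₂` commutes with the
action of `ε`. As `ad f₂` maps `L` into `ℂ f₂` and `ε` acts with square zero, `ε` kills `f₂` and
maps `f₁` to some `β f₂`; compatibility for `x = y = f₁` finally gives `β = c β`.
-/

open DualNumber TrivSqZeroExt

namespace DualNumber

variable {R : Type*} [CommRing R]

theorem derivation_ext {D₁ D₂ : Derivation R R[ε] R[ε]} (h : D₁ ε = D₂ ε) : D₁ = D₂ :=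
  Derivation.ext fun x => by
    rw [← inl_fst_add_inr_snd_eq x, inr_eq_smul_eps, ← algebraMap_eq_inl]
    simp [h]

theorem exists_derivation_eps_eq_smul_eps [IsAddTorsionFree R] (D : Derivation R R[ε] R[ε]) :
    ∃ c : R, D ε = c • ε := by
  have h := congrArg snd (D.leibniz ε ε)
  simp only [eps_mul_eps, map_zero, snd_zero, smul_eq_mul, snd_add, snd_mul, fst_eps, snd_eps,
    zero_mul, one_mul, zero_add] at h
  rw [← two_nsmul, eq_comm, two_nsmul_eq_zero] at h
  refine ⟨(D ε).snd, ?_⟩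
  rw [← inr_eq_smul_eps]
  ext
  · simpa using h
  · simp

instance isLieAbelian_derivation [IsAddTorsionFree R] : IsLieAbelian (Derivation R R[ε] R[ε]) where
  trivial D₁ D₂ := derivation_ext <| by
    obtain ⟨c₁, h₁⟩ := exists_derivation_eps_eq_smul_eps D₁
    obtain ⟨c₂, h₂⟩ := exists_derivation_eps_eq_smul_eps D₂
    simp [Derivation.commutator_apply, h₁, h₂, smul_smul, mul_comm]

theorem eq_zero_of_eps_smul_eq_smul {K M : Type*} [Field K] [AddCommGroup M] [Module K[ε] M]
    [Module K M] [IsScalarTower K K[ε] M] {v : M} (hv : v ≠ 0) {β : K}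
    (h : (ε : K[ε]) • v = β • v) : β = 0 := by
  have : (β * β) • v = 0 := by
    rw [mul_smul, ← h, smul_comm, ← h, smul_smul, eps_mul_eps, zero_smul]
  simpa [hv] using this

end DualNumber

/-- Let `L` be a module over the dual numbers `ℂ[ε]` which is also the two-dimensional
non-abelian complex Lie algebra (basis `f₁, f₂` with `⁅f₁, f₂⁆ = f₂`), and let
`ρ : L → Der(ℂ[ε])` be a ℂ-linear Lie algebra homomorphism satisfying the Lie–Rinehart
compatibility condition.  Then `ρ f₂ = 0`, `ε • f₂ = 0`, and there are `β, c ∈ ℂ` with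
`ε • f₁ = β • f₂`, `(ρ f₁)(ε) = c • ε` and `β (1 - c) = 0`. -/
theorem stmt_13 (L : Type*) [LieRing L] [LieAlgebra ℂ L]
    [Module (DualNumber ℂ) L] [IsScalarTower ℂ (DualNumber ℂ) L]
    (f₁ f₂ : L) (hli : LinearIndependent ℂ ![f₁, f₂])
    (hspan : Submodule.span ℂ {f₁, f₂} = ⊤)
    (hbr : ⁅f₁, f₂⁆ = f₂)
    (ρ : L →ₗ[ℂ] Derivation ℂ (DualNumber ℂ) (DualNumber ℂ))
    (hρ : ∀ x y : L, ρ ⁅x, y⁆ = ⁅ρ x, ρ y⁆)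
    (hcomp : ∀ (a : DualNumber ℂ) (x y : L), ⁅x, a • y⁆ = (ρ x) a • y + a • ⁅x, y⁆) :
    ρ f₂ = 0 ∧ (DualNumber.eps : DualNumber ℂ) • f₂ = 0 ∧
    ∃ β c : ℂ, (DualNumber.eps : DualNumber ℂ) • f₁ = β • f₂ ∧
      (ρ f₁) (DualNumber.eps : DualNumber ℂ) = c • (DualNumber.eps : DualNumber ℂ) ∧
      β * (1 - c) = 0 := by
  have hf₂ : f₂ ≠ 0 := by simpa using hli.ne_zero 1
  have hρf₂ : ρ f₂ = 0 := by rw [← hbr, hρ, trivial_lie_zero]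
  obtain ⟨c, hc⟩ := exists_derivation_eps_eq_smul_eps (ρ f₁)
  obtain ⟨γ, β, hεf₁⟩ := Submodule.mem_span_pair.mp (hspan ▸ Submodule.mem_top :
    (ε : ℂ[ε]) • f₁ ∈ Submodule.span ℂ {f₁, f₂})
  rw [eq_comm] at hεf₁
  -- `ad f₂` commutes with `ε` because `ρ f₂ = 0`, and `ad f₂ (γ f₁ + β f₂) = -γ f₂`.
  have hεf₂ : (ε : ℂ[ε]) • f₂ = γ • f₂ := by
    have hf₂f₁ : ⁅f₂, f₁⁆ = -f₂ := by rw [← lie_skew, hbr]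
    have h := hcomp ε f₂ f₁
    rw [hρf₂, hεf₁] at h
    simpa [hf₂f₁] using h.symm
  have hγ : γ = 0 := eq_zero_of_eps_smul_eq_smul hf₂ hεf₂
  simp only [hγ, zero_smul, zero_add] at hεf₁ hεf₂
  have hβ : β • f₂ = (c * β) • f₂ := by
    simpa [hεf₁, hc, hbr, smul_smul] using hcomp ε f₁ f₁
  refine ⟨hρf₂, hεf₂, β, c, hεf₁, hc, ?_⟩
  linear_combination smul_left_injective ℂ hf₂ hβ
end
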